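/- arXiv:1311.4987 — 4 statements merged into one kernel-verified Lean document; each statement's English description precedes it below -/
import Mathlib

section
/- For all natural numbers n ≥ 2 and all integers L with 1 ≤ L ≤ n-2, it holds that 5n(n-L)(n-L-1) / (e·L·(n-L+1)) > 1, where e is Euler's number. -/
/-! Since `e < 3` and `L < n`, the denominator is below `3 n (x + 1)` with `x = n - L ≥ 2`,
and `3 (x + 1) < 5 x (x - 1)` as soon as `x ≥ 2`. -/

lemma three_mul_add_one_lt_five_mul_mul_sub_one {x : ℝ} (hx : 2 ≤ x) :
    3 * (x + 1) < 5 * x * (x - 1) := by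
  nlinarith

lemma exp_one_mul_lt_five_mul_mul {n L : ℝ} (hL : 1 ≤ L) (hLn : L ≤ n - 2) :
    Real.exp 1 * L * (n - L + 1) < 5 * n * (n - L) * (n - L - 1) := by
  have hx : 2 ≤ n - L := by linarith
  have he : Real.exp 1 * L < 3 * n := by
    have := Real.exp_one_lt_d9
    nlinarith
  calc Real.exp 1 * L * (n - L + 1) < 3 * n * (n - L + 1) :=
        mul_lt_mul_of_pos_right he (by linarith)
    _ = n * (3 * ((n - L) + 1)) := by ring
    _ < n * (5 * (n - L) * (n - L - 1)) :=
        mul_lt_mul_of_pos_left (three_mul_add_one_lt_five_mul_mul_sub_one hx) (by linarith)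
    _ = 5 * n * (n - L) * (n - L - 1) := by ring

theorem forward_backward_ratio_gt_one_general (n : ℕ) (L : ℤ)
    (hL1 : 1 ≤ L) (hL2 : L ≤ (n : ℤ) - 2) :
    5 * (n : ℝ) * ((n : ℝ) - L) * ((n : ℝ) - L - 1) /
      (Real.exp 1 * (L : ℝ) * ((n : ℝ) - L + 1)) > 1 := by
  have hL : (1 : ℝ) ≤ L := by exact_mod_cast hL1
  have hLn : (L : ℝ) ≤ n - 2 := by exact_mod_cast hL2
  have hden : 0 < Real.exp 1 * (L : ℝ) * ((n : ℝ) - L + 1) :=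
    mul_pos (mul_pos (Real.exp_pos 1) (by linarith)) (by linarith)
  rw [gt_iff_lt, one_lt_div hden]
  exact exp_one_mul_lt_five_mul_mul hL hLn

theorem forward_backward_ratio_gt_one (n : ℕ) (hn : 2 ≤ n) (L : ℤ)
    (hL1 : 1 ≤ L) (hL2 : L ≤ (n : ℤ) - 2) :
    5 * (n : ℝ) * ((n : ℝ) - L) * ((n : ℝ) - L - 1) /
      (Real.exp 1 * (L : ℝ) * ((n : ℝ) - L + 1)) > 1 :=
  forward_backward_ratio_gt_one_general n L hL1 hL2
end

section
/- Let (ξ_t)_{t≥0} be a Markov chain on a finite state space X with target set X* and first hitting time τ. Let V : X → ℝ satisfy V(x) = 0 for x ∈ X* and V(x) > 0 for x ∉ X*. If there exist constants 0 < c_l ≤ c_u such that for every t ≥ 0 and every state x with V(x) > 0, c_l ≤ E[V(ξ_t) - V(ξ_{t+1}) | ξ_t = x] ≤ c_u, then V(ξ_0)/c_u ≤ E[τ | ξ_0] ≤ V(ξ_0)/c_l. -/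
/-! Write `q t` for the probability that the chain started at `x` has not hit `A` within `t`
steps and `W t` for the expectation of `V (ξ t)` on that event. Because `V` vanishes on `A`,
`W t - W (t + 1)` is the expected drift at time `t` on the same event, so the drift bounds give
`c_l * q t ≤ W t - W (t + 1) ≤ c_u * q t`. Summing, `c_l * ∑_{t<N} q t ≤ V x - W N ≤ c_u * ∑_{t<N} q t`,
where `0 ≤ W N ≤ (∑ |V|) * q N`. The left inequality makes `q` summable with sum at most
`V x / c_l`, hence `q N → 0`, and the right one then yields `V x ≤ c_u * ∑ q t` in the limit.
Finally `E τ = ∑ q t` by Abel summation, since `N * q N → 0` for an antitone summable `q`. -/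

/-- Probability that a Markov chain with (time-dependent) transition kernel `P`,
currently at time `s` in state `x`, first hits the target set `A` in exactly `t`
further steps (the target is treated as absorbing). -/
noncomputable def hitProb {X : Type*} [Fintype X] [DecidableEq X] (P : ℕ → X → X → ℝ) (A : Finset X) :
    ℕ → ℕ → X → ℝ
  | _, 0, x => if x ∈ A then 1 else 0
  | s, t + 1, x => if x ∈ A then 0 else ∑ y, P s x y * hitProb P A (s + 1) t y

/-- Expected first hitting time of the target set `A` for the chain with kernel `P`
started at `x` at time 0. -/
noncomputable def efht {X : Type*} [Fintype X] [DecidableEq X] (P : ℕ → X → X → ℝ) (A : Finset X)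
    (x : X) : ℝ :=
  ∑' t : ℕ, (t : ℝ) * hitProb P A 0 t x


open Filter Topology Finset

theorem Antitone.tendsto_nat_mul_of_summable {q : ℕ → ℝ} (hq : Antitone q) (hs : Summable q) :
    Tendsto (fun n : ℕ => (n : ℝ) * q n) atTop (𝓝 0) := by
  have hq0 : ∀ n, 0 ≤ q n := hq.le_of_tendsto hs.tendsto_atTop_zero
  have htail : Tendsto (fun n : ℕ => 2 * ∑' t, q (t + n / 2)) atTop (𝓝 0) := by
    simpa using ((tendsto_sum_nat_add q).comp (Nat.tendsto_div_const_atTop two_ne_zero)).const_mul 2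
  -- `n * q n ≤ 2 * (n - n / 2) * q n`, and the last `n - n / 2` terms before `n` dominate `q n`.
  refine squeeze_zero (fun n => mul_nonneg n.cast_nonneg (hq0 n)) (fun n => ?_) htail
  have hblock : ((n - n / 2 : ℕ) : ℝ) * q n ≤ ∑' t, q (t + n / 2) :=
    calc ((n - n / 2 : ℕ) : ℝ) * q n = ∑ _t ∈ range (n - n / 2), q n := by simp
      _ ≤ ∑ t ∈ range (n - n / 2), q (t + n / 2) :=
        sum_le_sum fun t ht => hq (by rw [mem_range] at ht; omega)
      _ ≤ ∑' t, q (t + n / 2) :=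
        ((summable_nat_add_iff _).2 hs).sum_le_tsum _ fun t _ => hq0 _
  have hn : (n : ℝ) ≤ 2 * ((n - n / 2 : ℕ) : ℝ) := by exact_mod_cast (by omega : n ≤ 2 * (n - n / 2))
  nlinarith [hq0 n]

/-- The tail-sum formula `E τ = ∑ P(τ > t)`, with `p t = P(τ = t)` and `q t = P(τ > t)`. -/
theorem hasSum_nat_mul_of_antitone {q p : ℕ → ℝ} (hq : Antitone q) (hs : Summable q)
    (hp : ∀ t, p (t + 1) = q t - q (t + 1)) :
    HasSum (fun t : ℕ => (t : ℝ) * p t) (∑' t, q t) := by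
  have habel : ∀ N, ∑ t ∈ range (N + 1), (t : ℝ) * p t = ∑ t ∈ range N, q t - N * q N := by
    intro N
    induction N with
    | zero => simp
    | succ N ih => rw [sum_range_succ, ih, hp, sum_range_succ]; push_cast; ring
  have hnonneg : ∀ t : ℕ, 0 ≤ (t : ℝ) * p t := by
    rintro (_ | t)
    · simp
    · rw [hp]; exact mul_nonneg t.succ.cast_nonneg (sub_nonneg.2 (hq t.le_succ))
  rw [hasSum_iff_tendsto_nat_of_nonneg hnonneg, ← tendsto_add_atTop_iff_nat 1]
  simp only [habel]
  simpa using hs.hasSum.tendsto_sum_nat.sub (hq.tendsto_nat_mul_of_summable hs)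

/-- `killedExpect P A f s t x` is `E[f (ξ (s + t)); ξ s, …, ξ (s + t) ∉ A | ξ s = x]`, the
expectation of `f` after `t` steps of the chain killed on entering `A`. -/
noncomputable def killedExpect {X : Type*} [Fintype X] [DecidableEq X] (P : ℕ → X → X → ℝ)
    (A : Finset X) (f : X → ℝ) : ℕ → ℕ → X → ℝ
  | _, 0, x => if x ∈ A then 0 else f x
  | s, t + 1, x => if x ∈ A then 0 else ∑ y, P s x y * killedExpect P A f (s + 1) t y

noncomputable abbrev survProb {X : Type*} [Fintype X] [DecidableEq X] (P : ℕ → X → X → ℝ)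
    (A : Finset X) : ℕ → ℕ → X → ℝ :=
  killedExpect P A 1

def drift {X : Type*} [Fintype X] (P : ℕ → X → X → ℝ) (t : ℕ) (f : X → ℝ) (x : X) : ℝ :=
  f x - ∑ y, P t x y * f y

namespace killedExpect

variable {X : Type*} [Fintype X] [DecidableEq X] {P : ℕ → X → X → ℝ} {A : Finset X}
  {f g : X → ℝ}

theorem of_mem {x : X} (hx : x ∈ A) (s t : ℕ) : killedExpect P A f s t x = 0 := by
  cases t <;> simp [killedExpect, hx]

theorem zero_eq (hf : ∀ x ∈ A, f x = 0) (s : ℕ) (x : X) : killedExpect P A f s 0 x = f x := by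
  by_cases hx : x ∈ A <;> simp [killedExpect, hx, hf]

theorem sub : ∀ (t s : ℕ) (x : X),
    killedExpect P A (f - g) s t x = killedExpect P A f s t x - killedExpect P A g s t x
  | 0, s, x => by by_cases hx : x ∈ A <;> simp [killedExpect, hx]
  | t + 1, s, x => by
    by_cases hx : x ∈ A
    · simp [killedExpect, hx]
    · simp [killedExpect, hx, sub t, mul_sub]

theorem const (c : ℝ) : ∀ (t s : ℕ) (x : X),
    killedExpect P A (fun _ => c) s t x = c * survProb P A s t x
  | 0, s, x => by by_cases hx : x ∈ A <;> simp [killedExpect, hx]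
  | t + 1, s, x => by
    by_cases hx : x ∈ A
    · simp [killedExpect, hx]
    · simp [killedExpect, hx, const c t, mul_sum, mul_left_comm]

theorem mono (hP : ∀ t x y, 0 ≤ P t x y) (hfg : ∀ x ∉ A, f x ≤ g x) :
    ∀ (t s : ℕ) (x : X), killedExpect P A f s t x ≤ killedExpect P A g s t x
  | 0, s, x => by by_cases hx : x ∈ A <;> simp [killedExpect, hx, hfg]
  | t + 1, s, x => by
    by_cases hx : x ∈ A
    · simp [killedExpect, hx]
    · simp only [killedExpect, hx, if_false]
      exact sum_le_sum fun y _ => mul_le_mul_of_nonneg_left (mono hP hfg t _ y) (hP _ _ _)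

theorem succ_eq_last_step : ∀ (t s : ℕ) (x : X), killedExpect P A f s (t + 1) x =
    killedExpect P A (fun y => ∑ z, P (s + t) y z * if z ∈ A then 0 else f z) s t x
  | 0, s, x => rfl
  | t + 1, s, x => by
    rw [← add_assoc, add_right_comm s t 1, killedExpect.eq_2, killedExpect.eq_2 (t := t)]
    simp only [succ_eq_last_step t (s + 1)]

theorem nonneg (hP : ∀ t x y, 0 ≤ P t x y) (hf : ∀ x ∉ A, 0 ≤ f x) (t s : ℕ) (x : X) :
    0 ≤ killedExpect P A f s t x := by
  simpa [const] using mono (f := fun _ => 0) hP hf t s x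

theorem sub_succ_eq_drift (hf : ∀ x ∈ A, f x = 0) (t s : ℕ) (x : X) :
    killedExpect P A f s t x - killedExpect P A f s (t + 1) x =
      killedExpect P A (drift P (s + t) f) s t x := by
  have hPf : (fun y => ∑ z, P (s + t) y z * if z ∈ A then 0 else f z) =
      fun y => ∑ z, P (s + t) y z * f z := by
    ext y
    refine sum_congr rfl fun z _ => ?_
    split_ifs with hz <;> simp [hf z, hz]
  rw [succ_eq_last_step, hPf, ← sub]
  rfl

theorem sub_eq_sum_drift (hf : ∀ x ∈ A, f x = 0) (N : ℕ) (x : X) :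
    f x - killedExpect P A f 0 N x = ∑ t ∈ range N, killedExpect P A (drift P t f) 0 t x := by
  rw [← zero_eq (P := P) hf 0 x, ← sum_range_sub' (fun t => killedExpect P A f 0 t x)]
  simp only [sub_succ_eq_drift hf, zero_add]

end killedExpect

section

variable {X : Type*} [Fintype X] [DecidableEq X] {P : ℕ → X → X → ℝ} {A : Finset X}

theorem survProb_antitone (hP : ∀ t x y, 0 ≤ P t x y) (hrow : ∀ t x, ∑ y, P t x y = 1)
    (s : ℕ) (x : X) : Antitone fun t => survProb P A s t x := by
  refine antitone_nat_of_succ_le fun t => ?_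
  unfold survProb
  rw [killedExpect.succ_eq_last_step]
  refine killedExpect.mono hP (fun y _ => ?_) t s x
  calc ∑ z, P (s + t) y z * (if z ∈ A then 0 else (1 : X → ℝ) z)
      ≤ ∑ z, P (s + t) y z := sum_le_sum fun z _ => by
        split_ifs <;> simp [hP]
    _ = 1 := hrow _ _

theorem hitProb_succ_eq_sub (hrow : ∀ t x, ∑ y, P t x y = 1) : ∀ (t s : ℕ) (x : X),
    hitProb P A s (t + 1) x = survProb P A s t x - survProb P A s (t + 1) x
  | 0, s, x => by
    by_cases hx : x ∈ A
    · simp [hitProb, killedExpect, hx]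
    · simp only [hitProb, killedExpect, hx, if_false, Pi.one_apply]
      rw [eq_sub_iff_add_eq, ← sum_add_distrib]
      refine (sum_congr rfl fun y _ => ?_).trans (hrow s x)
      split_ifs <;> ring
  | t + 1, s, x => by
    by_cases hx : x ∈ A
    · simp [hitProb, hx, killedExpect.of_mem]
    · unfold survProb
      rw [hitProb, killedExpect.eq_2 (t := t + 1), killedExpect.eq_2 (t := t)]
      simp only [hx, if_false, hitProb_succ_eq_sub hrow t, mul_sub, sum_sub_distrib]

theorem efht_eq_tsum_survProb (hP : ∀ t x y, 0 ≤ P t x y) (hrow : ∀ t x, ∑ y, P t x y = 1)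
    {x : X} (hs : Summable fun t => survProb P A 0 t x) :
    efht P A x = ∑' t, survProb P A 0 t x :=
  (hasSum_nat_mul_of_antitone (survProb_antitone hP hrow 0 x) hs
    fun t => hitProb_succ_eq_sub hrow t 0 x).tsum_eq

theorem mul_sum_survProb_le_sub {f : X → ℝ} {c : ℝ} (hP : ∀ t x y, 0 ≤ P t x y)
    (hf : ∀ x ∈ A, f x = 0) (hc : ∀ t, ∀ y ∉ A, c ≤ drift P t f y) (N : ℕ) (x : X) :
    c * ∑ t ∈ range N, survProb P A 0 t x ≤ f x - killedExpect P A f 0 N x := by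
  rw [killedExpect.sub_eq_sum_drift hf, mul_sum]
  exact sum_le_sum fun t _ => by
    simpa [killedExpect.const] using killedExpect.mono hP (hc t) t 0 x

theorem sub_le_mul_sum_survProb {f : X → ℝ} {c : ℝ} (hP : ∀ t x y, 0 ≤ P t x y)
    (hf : ∀ x ∈ A, f x = 0) (hc : ∀ t, ∀ y ∉ A, drift P t f y ≤ c) (N : ℕ) (x : X) :
    f x - killedExpect P A f 0 N x ≤ c * ∑ t ∈ range N, survProb P A 0 t x := by
  rw [killedExpect.sub_eq_sum_drift hf, mul_sum]
  exact sum_le_sum fun t _ => by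
    simpa [killedExpect.const] using killedExpect.mono hP (hc t) t 0 x

end

/-- Additive drift theorem: if the distance function `V` vanishes exactly on the
target set `A` and the one-step expected decrease of `V` is between the constants
`c_l` and `c_u` from every state with positive distance (at every time), then the
expected first hitting time of `A` from `x` is between `V x / c_u` and `V x / c_l`. -/
theorem additive_drift {X : Type*} [Fintype X] [DecidableEq X]
    (P : ℕ → X → X → ℝ) (A : Finset X)
    (hnonneg : ∀ t x y, 0 ≤ P t x y) (hrow : ∀ t x, ∑ y, P t x y = 1)
    (V : X → ℝ) (hV0 : ∀ x ∈ A, V x = 0) (hVpos : ∀ x ∉ A, 0 < V x)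
    (c_l c_u : ℝ) (hcl : 0 < c_l) (hcu : c_l ≤ c_u)
    (hdrift : ∀ t : ℕ, ∀ x : X, 0 < V x →
      c_l ≤ V x - ∑ y, P t x y * V y ∧ V x - ∑ y, P t x y * V y ≤ c_u) :
    ∀ x : X, V x / c_u ≤ efht P A x ∧ efht P A x ≤ V x / c_l := by
  intro x
  set q := fun t => survProb P A 0 t x
  set M := ∑ y, |V y|
  have hq0 : ∀ t, 0 ≤ q t := fun t => killedExpect.nonneg hnonneg (fun _ _ => zero_le_one) t 0 x
  have hW0 : ∀ N, 0 ≤ killedExpect P A V 0 N x := fun N =>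
    killedExpect.nonneg hnonneg (fun y hy => (hVpos y hy).le) N 0 x
  have hWM : ∀ N, killedExpect P A V 0 N x ≤ M * q N := fun N => by
    rw [← killedExpect.const]
    exact killedExpect.mono hnonneg
      (fun y _ => (le_abs_self _).trans (single_le_sum (fun y _ => abs_nonneg (V y)) (mem_univ y)))
      N 0 x
  have hpartial : ∀ N, ∑ t ∈ range N, q t ≤ V x / c_l := fun N => by
    rw [le_div_iff₀' hcl]
    linarith [mul_sum_survProb_le_sub hnonneg hV0 (fun t y hy => (hdrift t y (hVpos y hy)).1) N x,
      hW0 N]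
  have hs : Summable q := summable_of_sum_range_le hq0 hpartial
  have hlower : V x ≤ c_u * ∑' t, q t := by
    have hlim := (hs.hasSum.tendsto_sum_nat.const_mul c_u).add (hs.tendsto_atTop_zero.const_mul M)
    rw [mul_zero, add_zero] at hlim
    refine ge_of_tendsto' hlim fun N => ?_
    linarith [sub_le_mul_sum_survProb hnonneg hV0 (fun t y hy => (hdrift t y (hVpos y hy)).2) N x,
      hWM N]
  rw [efht_eq_tsum_survProb hnonneg hrow hs, div_le_iff₀' (hcl.trans_le hcu)]
  exact ⟨hlower, Real.tsum_le_of_sum_range_le hq0 hpartial⟩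
end

section
/- Let X be a finite set with target subset X*, let (ξ'_t)_{t≥0} be a time-homogeneous Markov chain on X with finite expected first hitting times, and let (ξ_t)_{t≥0} be a (possibly time-inhomogeneous) Markov chain on X. Let {X_0, X_1, ..., X_m} be the partition of X into level sets of the function x ↦ E[τ' | ξ'_0 = x], ordered so that E[τ' | ξ'_0 ∈ X_0] < E[τ' | ξ'_0 ∈ X_1] < ... < E[τ' | ξ'_0 ∈ X_m], with X_0 = X*. If for all t ≥ 0, all x ∈ X \ X_0, and all i ∈ {0,...,m-1}, ∑_{j=0}^{i} P(ξ_{t+1} ∈ X_j | ξ_t = x) ≥ ∑_{j=0}^{i} P(ξ'_1 ∈ X_j | ξ'_0 = x), then for every x ∈ X, E[τ | ξ_0 = x] ≤ E[τ' | ξ'_0 = x]. -/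
open Finset

section HitProb

variable {X : Type*} [Fintype X] [DecidableEq X]

lemma hitProb_nonneg {P : ℕ → X → X → ℝ} (hP : ∀ t x y, 0 ≤ P t x y) (A : Finset X) :
    ∀ t s x, 0 ≤ hitProb P A s t x
  | 0, s, x => by rw [hitProb]; positivity
  | t + 1, s, x => by
      rw [hitProb]
      split_ifs
      · exact le_rfl
      · exact sum_nonneg fun y _ => mul_nonneg (hP s x y) (hitProb_nonneg hP A t (s + 1) y)

lemma sum_range_hitProb_le_one {P : ℕ → X → X → ℝ} (hP : ∀ t x y, 0 ≤ P t x y)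
    (hrow : ∀ t x, ∑ y, P t x y = 1) (A : Finset X) :
    ∀ n s x, ∑ t ∈ range n, hitProb P A s t x ≤ 1
  | 0, _, _ => by simp
  | n + 1, s, x => by
      rw [sum_range_succ']
      by_cases hx : x ∈ A
      · simp [hitProb, hx]
      · calc ∑ t ∈ range n, hitProb P A s (t + 1) x + hitProb P A s 0 x
            = ∑ y, P s x y * ∑ t ∈ range n, hitProb P A (s + 1) t y := by
              simp only [hitProb, hx, if_false, add_zero, mul_sum]
              exact sum_comm
          _ ≤ ∑ y, P s x y * 1 := sum_le_sum fun y _ =>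
              mul_le_mul_of_nonneg_left (sum_range_hitProb_le_one hP hrow A n (s + 1) y) (hP s x y)
          _ = 1 := by simp [hrow s x]

lemma efht_nonneg {P : ℕ → X → X → ℝ} (hP : ∀ t x y, 0 ≤ P t x y) (A : Finset X) (x : X) :
    0 ≤ efht P A x :=
  tsum_nonneg fun t => mul_nonneg t.cast_nonneg (hitProb_nonneg hP A t 0 x)

lemma sum_range_mul_hitProb_le_of_superharmonic {P : ℕ → X → X → ℝ} (hP : ∀ t x y, 0 ≤ P t x y)
    (hrow : ∀ t x, ∑ y, P t x y = 1) {A : Finset X} {h : X → ℝ} (h_nonneg : ∀ x, 0 ≤ h x)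
    (hsuper : ∀ s, ∀ x ∉ A, 1 + ∑ y, P s x y * h y ≤ h x) :
    ∀ n s x, ∑ t ∈ range n, (t : ℝ) * hitProb P A s t x ≤ h x
  | 0, _, x => by simpa using h_nonneg x
  | n + 1, s, x => by
      rw [sum_range_succ']
      by_cases hx : x ∈ A
      · simpa [hitProb, hx] using h_nonneg x
      · have hstep : ∀ y, ∑ t ∈ range n, ((t : ℝ) + 1) * hitProb P A (s + 1) t y ≤ h y + 1 := by
          intro y
          simp only [add_mul, one_mul, sum_add_distrib]
          exact add_le_add
            (sum_range_mul_hitProb_le_of_superharmonic hP hrow h_nonneg hsuper n (s + 1) y)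
            (sum_range_hitProb_le_one hP hrow A n (s + 1) y)
        calc ∑ t ∈ range n, ((t + 1 : ℕ) : ℝ) * hitProb P A s (t + 1) x
              + (0 : ℕ) * hitProb P A s 0 x
            = ∑ y, P s x y * ∑ t ∈ range n, ((t : ℝ) + 1) * hitProb P A (s + 1) t y := by
              simp only [hitProb, hx, if_false, Nat.cast_zero, zero_mul, add_zero, Nat.cast_succ,
                mul_sum]
              rw [sum_comm]
              exact sum_congr rfl fun y _ => sum_congr rfl fun t _ => by ring
          _ ≤ ∑ y, P s x y * (h y + 1) :=
              sum_le_sum fun y _ => mul_le_mul_of_nonneg_left (hstep y) (hP s x y)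
          _ = 1 + ∑ y, P s x y * h y := by simp [mul_add, sum_add_distrib, hrow s x, add_comm]
          _ ≤ h x := hsuper s x hx

lemma efht_le_of_superharmonic {P : ℕ → X → X → ℝ} (hP : ∀ t x y, 0 ≤ P t x y)
    (hrow : ∀ t x, ∑ y, P t x y = 1) {A : Finset X} {h : X → ℝ} (h_nonneg : ∀ x, 0 ≤ h x)
    (hsuper : ∀ s, ∀ x ∉ A, 1 + ∑ y, P s x y * h y ≤ h x) (x : X) :
    efht P A x ≤ h x :=
  Real.tsum_le_of_sum_range_le (fun t => mul_nonneg t.cast_nonneg (hitProb_nonneg hP A t 0 x))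
    fun n => sum_range_mul_hitProb_le_of_superharmonic hP hrow h_nonneg hsuper n 0 x

lemma hitProb_const_start (Q : X → X → ℝ) (A : Finset X) :
    ∀ t s s' x, hitProb (fun _ => Q) A s t x = hitProb (fun _ => Q) A s' t x
  | 0, _, _, _ => rfl
  | t + 1, s, s', x => by
      simp only [hitProb, hitProb_const_start Q A t (s + 1) (s' + 1)]

lemma efht_const_eq_one_add {Q : X → X → ℝ} (hrow : ∀ x, ∑ y, Q x y = 1) {A : Finset X}
    (hfin : ∀ x, Summable fun t : ℕ => (t : ℝ) * hitProb (fun _ => Q) A 0 t x)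
    (hhit : ∀ x, ∑' t : ℕ, hitProb (fun _ => Q) A 0 t x = 1) {x : X} (hx : x ∉ A) :
    efht (fun _ => Q) A x = 1 + ∑ y, Q x y * efht (fun _ => Q) A y := by
  set p : ℕ → X → ℝ := fun t y => hitProb (fun _ => Q) A 0 t y
  -- a non-summable series has `tsum` equal to `0`, so `hhit` forces summability
  have hp_summable : ∀ y, Summable fun t => p t y := fun y => by
    by_contra h
    exact zero_ne_one ((tsum_eq_zero_of_not_summable h).symm.trans (hhit y))
  have hp_succ : ∀ t, p (t + 1) x = ∑ y, Q x y * p t y := fun t => by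
    simp only [p, hitProb, hx, if_false, hitProb_const_start Q A t 1 0]
  have hshift : ∀ y, ∑' t : ℕ, ((t : ℝ) + 1) * p t y = efht (fun _ => Q) A y + 1 := fun y => by
    simp only [add_mul, one_mul]
    rw [(hfin y).tsum_add (hp_summable y), hhit y]
    rfl
  calc efht (fun _ => Q) A x = ∑' t : ℕ, ∑ y, Q x y * (((t : ℝ) + 1) * p t y) := by
        rw [efht, (hfin x).tsum_eq_zero_add]
        simp only [p, CharP.cast_eq_zero, zero_mul, zero_add, Nat.cast_succ] at hp_succ ⊢
        refine tsum_congr fun t => ?_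
        rw [hp_succ, mul_sum]
        exact sum_congr rfl fun y _ => by ring
    _ = ∑ y, Q x y * (efht (fun _ => Q) A y + 1) := by
        rw [Summable.tsum_finsetSum fun y _ =>
          (((hfin y).add (hp_summable y)).congr fun t => by ring).mul_left (Q x y)]
        exact sum_congr rfl fun y _ => by rw [tsum_mul_left, hshift]
    _ = 1 + ∑ y, Q x y * efht (fun _ => Q) A y := by
        simp [mul_add, sum_add_distrib, hrow x, add_comm]

end HitProb

lemma sum_range_mul_le_of_partial_sums_le {G a b : ℕ → ℝ} {n : ℕ}
    (hG : ∀ i < n, G i ≤ G (i + 1))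
    (htotal : ∑ i ∈ range (n + 1), a i = ∑ i ∈ range (n + 1), b i)
    (hpartial : ∀ i < n, ∑ j ∈ range (i + 1), b j ≤ ∑ j ∈ range (i + 1), a j) :
    ∑ i ∈ range (n + 1), G i * a i ≤ ∑ i ∈ range (n + 1), G i * b i := by
  have by_parts := fun c : ℕ → ℝ => sum_range_by_parts G c (n + 1)
  simp only [smul_eq_mul, add_tsub_cancel_right] at by_parts
  rw [by_parts, by_parts, htotal]
  refine sub_le_sub_left (sum_le_sum fun i hi => ?_) _
  have hi : i < n := mem_range.mp hi
  exact mul_le_mul_of_nonneg_left (hpartial i hi) (sub_nonneg.mpr (hG i hi))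

section Partition

variable {X : Type*} [Fintype X] [DecidableEq X] {m : ℕ} {part : ℕ → Finset X}

lemma sum_eq_sum_range_sum_part {M : Type*} [AddCommMonoid M]
    (hdisj : ∀ i ≤ m, ∀ j ≤ m, i ≠ j → Disjoint (part i) (part j))
    (hcover : ∀ x : X, ∃ i ≤ m, x ∈ part i) (f : X → M) :
    ∑ y, f y = ∑ i ∈ range (m + 1), ∑ y ∈ part i, f y := by
  rw [← sum_biUnion fun i hi j hj => hdisj i (Nat.lt_succ_iff.mp (mem_range.mp hi)) j
    (Nat.lt_succ_iff.mp (mem_range.mp hj))]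
  congr
  ext x
  simpa [Nat.lt_succ_iff] using hcover x

lemma sum_mul_le_of_partial_sums_le (hne : ∀ i ≤ m, (part i).Nonempty)
    (hdisj : ∀ i ≤ m, ∀ j ≤ m, i ≠ j → Disjoint (part i) (part j))
    (hcover : ∀ x : X, ∃ i ≤ m, x ∈ part i) {g : X → ℝ}
    (hlevel : ∀ i ≤ m, ∀ x ∈ part i, ∀ y ∈ part i, g x = g y)
    (hmono : ∀ i < m, ∀ x ∈ part i, ∀ y ∈ part (i + 1), g x ≤ g y)
    {p q : X → ℝ} (hsum : ∑ y, p y = ∑ y, q y)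
    (hdom : ∀ i < m, ∑ j ∈ range (i + 1), ∑ y ∈ part j, q y
      ≤ ∑ j ∈ range (i + 1), ∑ y ∈ part j, p y) :
    ∑ y, p y * g y ≤ ∑ y, q y * g y := by
  set G : ℕ → ℝ := fun i => if hi : i ≤ m then g (hne i hi).choose else 0
  have hG : ∀ i ≤ m, ∀ x ∈ part i, g x = G i := fun i hi x hx => by
    simp only [G, dif_pos hi]
    exact hlevel i hi x hx _ (hne i hi).choose_spec
  have hG_mono : ∀ i < m, G i ≤ G (i + 1) := fun i hi => by
    rw [← hG i hi.le _ (hne i hi.le).choose_spec, ← hG (i + 1) hi _ (hne (i + 1) hi).choose_spec]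
    exact hmono i hi _ (hne i hi.le).choose_spec _ (hne (i + 1) hi).choose_spec
  have hgroup : ∀ r : X → ℝ, ∑ y, r y * g y = ∑ i ∈ range (m + 1), G i * ∑ y ∈ part i, r y :=
    fun r => by
      rw [sum_eq_sum_range_sum_part hdisj hcover]
      refine sum_congr rfl fun i hi => ?_
      rw [mul_sum]
      exact sum_congr rfl fun y hy => by
        rw [hG i (Nat.lt_succ_iff.mp (mem_range.mp hi)) y hy, mul_comm]
  rw [hgroup, hgroup]
  refine sum_range_mul_le_of_partial_sums_le hG_mono ?_ hdom
  rwa [← sum_eq_sum_range_sum_part hdisj hcover, ← sum_eq_sum_range_sum_part hdisj hcover]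

end Partition

theorem noisy_chain_faster_general {X : Type*} [Fintype X] [DecidableEq X]
    (A : Finset X) (P' : X → X → ℝ) (P : ℕ → X → X → ℝ)
    (hP'nonneg : ∀ x y, 0 ≤ P' x y) (hP'row : ∀ x, ∑ y, P' x y = 1)
    (hPnonneg : ∀ t x y, 0 ≤ P t x y) (hProw : ∀ t x, ∑ y, P t x y = 1)
    (hfin : ∀ x, Summable (fun t : ℕ => (t : ℝ) * hitProb (fun _ => P') A 0 t x))
    (hhit : ∀ x, ∑' t : ℕ, hitProb (fun _ => P') A 0 t x = 1)
    -- the EFHT-partition X_0, ..., X_m of the homogeneous chain P'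
    (m : ℕ) (part : ℕ → Finset X)
    (hne : ∀ i ≤ m, (part i).Nonempty)
    (hdisj : ∀ i ≤ m, ∀ j ≤ m, i ≠ j → Disjoint (part i) (part j))
    (hcover : ∀ x : X, ∃ i ≤ m, x ∈ part i)
    (hlevel : ∀ i ≤ m, ∀ x ∈ part i, ∀ y ∈ part i,
      efht (fun _ => P') A x = efht (fun _ => P') A y)
    (horder : ∀ i ≤ m, ∀ j ≤ m, i < j → ∀ x ∈ part i, ∀ y ∈ part j,
      efht (fun _ => P') A x < efht (fun _ => P') A y)
    -- the domination condition
    (hdom : ∀ t : ℕ, ∀ x : X, x ∉ A → ∀ i < m,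
      ∑ j ∈ Finset.range (i + 1), ∑ y ∈ part j, P t x y
        ≥ ∑ j ∈ Finset.range (i + 1), ∑ y ∈ part j, P' x y) :
    ∀ x : X, efht P A x ≤ efht (fun _ => P') A x := by
  set g := efht (fun _ => P') A
  have hmono : ∀ i < m, ∀ x ∈ part i, ∀ y ∈ part (i + 1), g x ≤ g y :=
    fun i hi x hx y hy => (horder i hi.le (i + 1) hi (Nat.lt_succ_self i) x hx y hy).le
  refine efht_le_of_superharmonic hPnonneg hProw (efht_nonneg (fun _ => hP'nonneg) A)
    fun s x hx => ?_
  calc 1 + ∑ y, P s x y * g y ≤ 1 + ∑ y, P' x y * g y := by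
        gcongr 1 + ?_
        exact sum_mul_le_of_partial_sums_le hne hdisj hcover hlevel hmono
          ((hProw s x).trans (hP'row x).symm) (hdom s x hx)
    _ = g x := (efht_const_eq_one_add hP'row hfin hhit hx).symm

/-- Comparison theorem (noise makes optimization no slower): if from every
non-optimal state, at every time, the chain `P` dominates the homogeneous chain
`P'` in terms of its probability of jumping into the union of the first levels of
the EFHT-partition of `P'`, then the expected first hitting time of `P` is, from
every state, at most that of `P'`. -/
theorem noisy_chain_faster {X : Type*} [Fintype X] [DecidableEq X]
    (A : Finset X) (P' : X → X → ℝ) (P : ℕ → X → X → ℝ)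
    (hP'nonneg : ∀ x y, 0 ≤ P' x y) (hP'row : ∀ x, ∑ y, P' x y = 1)
    (hPnonneg : ∀ t x y, 0 ≤ P t x y) (hProw : ∀ t x, ∑ y, P t x y = 1)
    (hfin : ∀ x, Summable (fun t : ℕ => (t : ℝ) * hitProb (fun _ => P') A 0 t x))
    (hhit : ∀ x, ∑' t : ℕ, hitProb (fun _ => P') A 0 t x = 1)
    -- the EFHT-partition X_0, ..., X_m of the homogeneous chain P'
    (m : ℕ) (part : ℕ → Finset X)
    (hne : ∀ i ≤ m, (part i).Nonempty)
    (hdisj : ∀ i ≤ m, ∀ j ≤ m, i ≠ j → Disjoint (part i) (part j))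
    (hcover : ∀ x : X, ∃ i ≤ m, x ∈ part i)
    (hpart0 : part 0 = A)
    (hlevel : ∀ i ≤ m, ∀ x ∈ part i, ∀ y ∈ part i,
      efht (fun _ => P') A x = efht (fun _ => P') A y)
    (horder : ∀ i ≤ m, ∀ j ≤ m, i < j → ∀ x ∈ part i, ∀ y ∈ part j,
      efht (fun _ => P') A x < efht (fun _ => P') A y)
    -- the domination condition
    (hdom : ∀ t : ℕ, ∀ x : X, x ∉ A → ∀ i < m,
      ∑ j ∈ Finset.range (i + 1), ∑ y ∈ part j, P t x y
        ≥ ∑ j ∈ Finset.range (i + 1), ∑ y ∈ part j, P' x y) :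
    ∀ x : X, efht P A x ≤ efht (fun _ => P') A x :=
  noisy_chain_faster_general A P' P hP'nonneg hP'row hPnonneg hProw hfin hhit m part hne hdisj
    hcover hlevel horder hdom
end

section
/- Let G = (V, E) be a finite undirected connected graph. The expected cover time of a simple random walk on G (started at any vertex) is at most 2|E|(|V| - 1), where the cover time is the number of steps until every vertex has been visited at least once. -/
/-- The transition kernel, on pairs (current vertex, set of visited vertices), of
the simple random walk on the graph `G` which records the visited vertices: from
`(v, S)` the walk moves to a uniformly random neighbor `u` of `v` and the visited
set becomes `insert u S`. -/
noncomputable def coverKernel {V : Type*} [Fintype V] [DecidableEq V]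
    (G : SimpleGraph V) [DecidableRel G.Adj] :
    V × Finset V → V × Finset V → ℝ :=
  fun s t =>
    if G.Adj s.1 t.1 ∧ t.2 = insert t.1 s.2 then 1 / (G.degree s.1 : ℝ) else 0

/-!
Write `h_u x` for the expected time for the walk from `x` to reach `u`; it is the solution of
`h_u u = 0`, `(L h_u) x = deg x` for `x ≠ u`, where `L` is the graph Laplacian, and then
`L h_u = deg - 2|E| δ_u`. For an edge `ab`, `w = h_b - h_a` has `L w = 2|E| (δ_a - δ_b)`, so the
energy `⟪w, L w⟫ = 2|E| (w a - w b)` dominates the edge term `(w a - w b)²`: the commute time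
`h_b a + h_a b` across an edge is at most `2|E|`.

Growing a list of vertices from `[v]` by detours `x → y → x` along edges leaving the visited set
gives a sequence `w₀ = v, …, w_L` through all vertices with `∑ h_{w_{i+1}} w_i ≤ 2|E| (|V| - 1)`.
The cover time is at most the time to visit `w₀, …, w_L` in this order, which is that sum: the
expected time to finish the tour from `x`, heading next for the first unvisited `w_k`, is a
supersolution of the first-step equations of the walk that records its visited set, and a
nonnegative supersolution bounds the expected hitting time.
-/

open Finset Matrix

section MarkovChain

variable {X : Type*} [Fintype X] [DecidableEq X] {K : X → X → ℝ} {A : Finset X}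

lemma hitProb_const_eq (t : ℕ) (s s' : ℕ) (x : X) :
    hitProb (fun _ => K) A s t x = hitProb (fun _ => K) A s' t x := by
  induction t generalizing s s' x with
  | zero => rfl
  | succ t ih => simp only [hitProb, ih (s + 1) (s' + 1)]

lemma hitProb_zero (x : X) : hitProb (fun _ => K) A 0 0 x = if x ∈ A then 1 else 0 := rfl

lemma hitProb_succ (t : ℕ) (x : X) :
    hitProb (fun _ => K) A 0 (t + 1) x =
      if x ∈ A then 0 else ∑ y, K x y * hitProb (fun _ => K) A 0 t y := by
  simp only [hitProb, hitProb_const_eq t 1 0]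

lemma hitProb_nonneg_s13 (hK : ∀ x y, 0 ≤ K x y) (t : ℕ) (x : X) :
    0 ≤ hitProb (fun _ => K) A 0 t x := by
  induction t generalizing x with
  | zero => simp only [hitProb]; positivity
  | succ t ih =>
    rw [hitProb_succ]
    split_ifs
    exacts [le_rfl, sum_nonneg fun y _ => mul_nonneg (hK x y) (ih y)]

lemma sum_range_hitProb_le_one_s13 (hK : ∀ x y, 0 ≤ K x y) (hK₁ : ∀ x, ∑ y, K x y ≤ 1) (T : ℕ)
    (x : X) : ∑ t ∈ range T, hitProb (fun _ => K) A 0 t x ≤ 1 := by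
  induction T generalizing x with
  | zero => simp
  | succ T ih =>
    rw [sum_range_succ']
    by_cases hx : x ∈ A
    · simp [hitProb, hx]
    calc ∑ t ∈ range T, hitProb (fun _ => K) A 0 (t + 1) x + hitProb (fun _ => K) A 0 0 x
        = ∑ y, K x y * ∑ t ∈ range T, hitProb (fun _ => K) A 0 t y := by
          simp only [hitProb_succ, hitProb_zero, if_neg hx, add_zero, mul_sum]
          exact Finset.sum_comm
      _ ≤ ∑ y, K x y := sum_le_sum fun y _ => mul_le_of_le_one_right (hK x y) (ih y)
      _ ≤ 1 := hK₁ x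

lemma sum_range_mul_hitProb_le (hK : ∀ x y, 0 ≤ K x y) (hK₁ : ∀ x, ∑ y, K x y ≤ 1)
    {s : Set X} (hs : ∀ x y, x ∈ s → K x y ≠ 0 → y ∈ s) {f : X → ℝ}
    (hf₀ : ∀ x ∈ s, 0 ≤ f x) (hf : ∀ x ∈ s, x ∉ A → 1 + ∑ y, K x y * f y ≤ f x) (T : ℕ) :
    ∀ x ∈ s, ∑ t ∈ range T, (t : ℝ) * hitProb (fun _ => K) A 0 t x ≤ f x := by
  induction T with
  | zero => simpa using hf₀
  | succ T ih =>
    intro x hx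
    rw [sum_range_succ', Nat.cast_zero, zero_mul, add_zero]
    by_cases hxA : x ∈ A
    · simpa [hitProb_succ, hxA] using hf₀ x hx
    have hy : ∀ y, K x y * ∑ t ∈ range T, ((t : ℝ) + 1) * hitProb (fun _ => K) A 0 t y ≤
        K x y * f y + K x y := fun y => by
      by_cases hKxy : K x y = 0
      · simp [hKxy]
      rw [← mul_add_one]
      refine mul_le_mul_of_nonneg_left ?_ (hK x y)
      simp only [add_one_mul, sum_add_distrib]
      exact add_le_add (ih y (hs x y hx hKxy)) (sum_range_hitProb_le_one_s13 hK hK₁ T y)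
    calc ∑ t ∈ range T, ((t + 1 : ℕ) : ℝ) * hitProb (fun _ => K) A 0 (t + 1) x
        = ∑ y, K x y * ∑ t ∈ range T, ((t : ℝ) + 1) * hitProb (fun _ => K) A 0 t y := by
          simp only [hitProb_succ, if_neg hxA, mul_sum, Nat.cast_succ]
          rw [Finset.sum_comm]
          exact sum_congr rfl fun y _ => sum_congr rfl fun t _ => by ring
      _ ≤ ∑ y, K x y * f y + ∑ y, K x y := by
          rw [← sum_add_distrib]
          exact sum_le_sum fun y _ => hy y
      _ ≤ 1 + ∑ y, K x y * f y := by linarith [hK₁ x]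
      _ ≤ f x := hf x hx hxA

theorem efht_le_of_supersolution (hK : ∀ x y, 0 ≤ K x y) (hK₁ : ∀ x, ∑ y, K x y ≤ 1)
    {s : Set X} (hs : ∀ x y, x ∈ s → K x y ≠ 0 → y ∈ s) {f : X → ℝ}
    (hf₀ : ∀ x ∈ s, 0 ≤ f x) (hf : ∀ x ∈ s, x ∉ A → 1 + ∑ y, K x y * f y ≤ f x) {x : X}
    (hx : x ∈ s) : efht (fun _ => K) A x ≤ f x :=
  Real.tsum_le_of_sum_range_le (fun t => mul_nonneg t.cast_nonneg (hitProb_nonneg_s13 hK t x))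
    fun T => sum_range_mul_hitProb_le hK hK₁ hs hf₀ hf T x hx

end MarkovChain

section PathCost

variable {V : Type*}

def pathCost (c : V → V → ℝ) : List V → ℝ
  | x :: y :: l => c x y + pathCost c (y :: l)
  | _ => 0

lemma pathCost_append_cons (c : V → V → ℝ) (l₁ l₂ : List V) (x : V) :
    pathCost c (l₁ ++ x :: l₂) = pathCost c (l₁ ++ [x]) + pathCost c (x :: l₂) := by
  induction l₁ with
  | nil => simp [pathCost]
  | cons a t ih =>
    cases t with
    | nil => simp [pathCost]
    | cons b t => simp only [List.cons_append, pathCost] at ih ⊢; rw [ih, add_assoc]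

lemma pathCost_eq_sum_range (c : V → V → ℝ) (d : V) (l : List V) :
    pathCost c l = ∑ i ∈ range (l.length - 1), c (l.getD i d) (l.getD (i + 1) d) := by
  induction l with
  | nil => simp [pathCost]
  | cons a t ih =>
    cases t with
    | nil => simp [pathCost]
    | cons b t =>
      rw [pathCost, ih]
      simp only [List.length_cons, Nat.add_sub_cancel, sum_range_succ', List.getD_cons_succ,
        List.getD_cons_zero]
      ring

end PathCost

namespace SimpleGraph

variable {V : Type*} [Fintype V] [DecidableEq V] {G : SimpleGraph V}

lemma Connected.exists_cover_list (hG : G.Connected) {c : V → V → ℝ} {M : ℝ}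
    (hc : ∀ x y, G.Adj x y → c x y + c y x ≤ M) (l : List V) (hl : l ≠ []) :
    ∃ l' : List V, l'.head? = l.head? ∧ (∀ x, x ∈ l') ∧
      pathCost c l' ≤ pathCost c l + M * #(univ \ l.toFinset) := by
  obtain ⟨n, hn⟩ : ∃ n, #(univ \ l.toFinset) = n := ⟨_, rfl⟩
  induction n generalizing l with
  | zero =>
    refine ⟨l, rfl, fun x => ?_, by simp [hn]⟩
    exact List.mem_toFinset.1 (sdiff_eq_empty_iff_subset.1 (card_eq_zero.1 hn) (mem_univ x))
  | succ n ih =>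
    obtain ⟨u, hu⟩ : ∃ u, u ∉ l := by
      obtain ⟨u, hu⟩ := card_pos.1 (by omega : 0 < #(univ \ l.toFinset))
      exact ⟨u, by simpa using hu⟩
    obtain ⟨a, ha⟩ := List.exists_mem_of_ne_nil l hl
    obtain ⟨⟨⟨x, y⟩, hxy⟩, -, hx, hy⟩ :=
      (hG.preconnected a u).some.exists_boundary_dart {z | z ∈ l} ha hu
    simp only [Set.mem_ofPred_eq] at hx hy hxy
    obtain ⟨l₁, l₂, rfl⟩ := List.append_of_mem hx
    have hcard : #(univ \ (l₁ ++ x :: y :: x :: l₂).toFinset) = n := by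
      have hins : (l₁ ++ x :: y :: x :: l₂).toFinset = insert y (l₁ ++ x :: l₂).toFinset := by
        ext z
        simp only [List.toFinset_append, List.toFinset_cons, mem_union, mem_insert,
          List.mem_toFinset]
        tauto
      have hy' : y ∈ univ \ (l₁ ++ x :: l₂).toFinset :=
        mem_sdiff.2 ⟨mem_univ y, mt List.mem_toFinset.1 hy⟩
      rw [hins, sdiff_insert, card_erase_of_mem hy', hn, Nat.add_sub_cancel]
    obtain ⟨l', hhead, hcover, hcost⟩ := ih (l₁ ++ x :: y :: x :: l₂) (by simp) hcard
    rw [hcard] at hcost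
    refine ⟨l', hhead.trans (by cases l₁ <;> rfl), hcover, ?_⟩
    rw [pathCost_append_cons, pathCost, pathCost] at hcost
    rw [pathCost_append_cons, hn, Nat.cast_succ]
    linarith [hc x y hxy]

lemma Connected.exists_cover_seq (hG : G.Connected) {c : V → V → ℝ} {M : ℝ}
    (hc : ∀ x y, G.Adj x y → c x y + c y x ≤ M) (v : V) :
    ∃ (L : ℕ) (w : ℕ → V), w 0 = v ∧ (∀ x, ∃ i ≤ L, w i = x) ∧
      ∑ i ∈ range L, c (w i) (w (i + 1)) ≤ M * (Fintype.card V - 1) := by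
  obtain ⟨l, hhead, hcover, hcost⟩ := hG.exists_cover_list hc [v] (List.cons_ne_nil v [])
  refine ⟨l.length - 1, fun i => l.getD i v, ?_, fun x => ?_, ?_⟩
  · cases l with
    | nil => simp at hhead
    | cons a t => simpa using hhead
  · obtain ⟨i, hi, rfl⟩ := List.mem_iff_getElem.1 (hcover x)
    exact ⟨i, by omega, List.getD_eq_getElem _ _ hi⟩
  · rw [← pathCost_eq_sum_range]
    have hcard : (#(univ \ {v}) : ℝ) = Fintype.card V - 1 := by
      rw [card_univ_sdiff, card_singleton, Nat.cast_sub (Fintype.card_pos_iff.2 ⟨v⟩), Nat.cast_one]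
    simpa [pathCost, hcard] using hcost

variable [DecidableRel G.Adj]

lemma apply_eq_of_adj_of_lapMatrix_mulVec_nonpos {g : V → ℝ} {a b : V}
    (hg : (G.lapMatrix ℝ *ᵥ g) a ≤ 0) (hmax : ∀ z, g z ≤ g a) (hab : G.Adj a b) :
    g b = g a := by
  have hsum : ∑ y ∈ G.neighborFinset a, (g a - g y) ≤ 0 := by
    rw [sum_sub_distrib, sum_const, card_neighborFinset_eq_degree, nsmul_eq_mul]
    rwa [lapMatrix_mulVec_apply] at hg
  have hb := single_le_sum (f := fun y => g a - g y) (fun y _ => sub_nonneg.2 (hmax y))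
    ((G.mem_neighborFinset a b).2 hab)
  linarith [hmax b]

lemma Walk.apply_eq_of_lapMatrix_mulVec_nonpos {g : V → ℝ} {u : V}
    (hg : ∀ z ≠ u, (G.lapMatrix ℝ *ᵥ g) z ≤ 0) {a : V} (p : G.Walk a u)
    (hmax : ∀ z, g z ≤ g a) : g u = g a := by
  induction p with
  | nil => rfl
  | @cons a b u hab q ih =>
    by_cases hau : a = u
    · rw [hau]
    have hba := apply_eq_of_adj_of_lapMatrix_mulVec_nonpos (hg a hau) hmax hab
    rw [ih hg (hba ▸ hmax), hba]

lemma Connected.le_of_lapMatrix_mulVec_nonpos (hG : G.Connected) {g : V → ℝ} {u : V}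
    (hg : ∀ z ≠ u, (G.lapMatrix ℝ *ᵥ g) z ≤ 0) (x : V) : g x ≤ g u := by
  obtain ⟨x₀, -, hx₀⟩ := exists_max_image univ g ⟨u, mem_univ u⟩
  rw [(hG.preconnected x₀ u).some.apply_eq_of_lapMatrix_mulVec_nonpos hg
    fun z => hx₀ z (mem_univ z)]
  exact hx₀ x (mem_univ x)

lemma sum_lapMatrix_mulVec (f : V → ℝ) : ∑ x, (G.lapMatrix ℝ *ᵥ f) x = 0 := by
  rw [← one_dotProduct, dotProduct_mulVec, ← mulVec_transpose, (isSymm_lapMatrix ℝ G).eq]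
  exact (congrArg (· ⬝ᵥ f) (lapMatrix_mulVec_const_eq_zero G)).trans (zero_dotProduct f)

lemma sq_sub_le_dotProduct_lapMatrix_mulVec {a b : V} (hab : G.Adj a b) (f : V → ℝ) :
    (f a - f b) ^ 2 ≤ f ⬝ᵥ (G.lapMatrix ℝ *ᵥ f) := by
  rw [← toLinearMap₂'_apply', lapMatrix_toLinearMap₂']
  set Q : V → V → ℝ := fun i j => if G.Adj i j then (f i - f j) ^ 2 else 0
  have hQ : ∀ i j, 0 ≤ Q i j := fun i j => by positivity
  have hab' : Q a b ≤ ∑ j, Q a j := single_le_sum (fun j _ => hQ a j) (mem_univ b)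
  have hba' : Q b a ≤ ∑ j, Q b j := single_le_sum (fun j _ => hQ b j) (mem_univ a)
  have hpair : ∑ j, Q a j + ∑ j, Q b j ≤ ∑ i, ∑ j, Q i j := by
    rw [← sum_pair (f := fun i => ∑ j, Q i j) hab.ne]
    exact sum_le_sum_of_subset_of_nonneg (subset_univ _) fun i _ _ => sum_nonneg fun j _ => hQ i j
  simp only [Q, if_pos hab, if_pos hab.symm] at hab' hba'
  nlinarith

/-- `h x` is the expected time for the simple random walk from `x` to reach `u`: first-step
analysis gives `h x = 1 + (∑_{y ~ x} h y) / deg x` for `x ≠ u`. -/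
def IsHittingTime (G : SimpleGraph V) [DecidableRel G.Adj] (u : V) (h : V → ℝ) : Prop :=
  h u = 0 ∧ ∀ x ≠ u, (G.lapMatrix ℝ *ᵥ h) x = G.degree x

lemma Connected.exists_isHittingTime (hG : G.Connected) (u : V) : ∃ h, G.IsHittingTime u h := by
  -- a square system, injective by the maximum principle applied to `±g`
  set M := (G.lapMatrix ℝ).updateRow u (Pi.single u 1)
  have hM : ∀ g, M *ᵥ g = Function.update (G.lapMatrix ℝ *ᵥ g) u (g u) := fun g => by
    rw [updateRow_mulVec, single_dotProduct, one_mul]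
  have hinj : Function.Injective M.mulVec := by
    intro g₁ g₂ h₁₂
    set g := g₁ - g₂
    have hg : M *ᵥ g = 0 := by rw [mulVec_sub, h₁₂, sub_self]
    rw [hM] at hg
    have hgu : g u = 0 := by simpa using congrFun hg u
    have hharm : ∀ z ≠ u, (G.lapMatrix ℝ *ᵥ g) z = 0 := fun z hz => by
      simpa [hz] using congrFun hg z
    suffices g = 0 from sub_eq_zero.1 this
    funext x
    rw [Pi.zero_apply]
    refine le_antisymm ?_ ?_
    · exact hgu ▸ hG.le_of_lapMatrix_mulVec_nonpos (fun z hz => (hharm z hz).le) x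
    · have := hG.le_of_lapMatrix_mulVec_nonpos (g := -g) (u := u)
        (fun z hz => by rw [mulVec_neg, Pi.neg_apply, hharm z hz, neg_zero]) x
      simp only [Pi.neg_apply, hgu] at this
      linarith
  obtain ⟨h, hh⟩ := mulVec_surjective_iff_isUnit.2 (mulVec_injective_iff_isUnit.1 hinj)
    (Function.update (fun x => (G.degree x : ℝ)) u 0)
  rw [hM] at hh
  refine ⟨h, by simpa using congrFun hh u, fun x hx => by simpa [hx] using congrFun hh x⟩

namespace IsHittingTime

variable {u : V} {h : V → ℝ}

lemma nonneg (hG : G.Connected) (hh : G.IsHittingTime u h) (x : V) : 0 ≤ h x := by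
  have := hG.le_of_lapMatrix_mulVec_nonpos (g := -h) (u := u)
    (fun z hz => by simp [mulVec_neg, hh.2 z hz]) x
  simp only [Pi.neg_apply, hh.1] at this
  linarith

lemma lapMatrix_mulVec_apply (hh : G.IsHittingTime u h) (x : V) :
    (G.lapMatrix ℝ *ᵥ h) x = G.degree x - if x = u then 2 * (#G.edgeFinset : ℝ) else 0 := by
  by_cases hxu : x = u
  swap
  · rw [if_neg hxu, sub_zero, hh.2 x hxu]
  subst hxu
  have hsum := sum_lapMatrix_mulVec (G := G) h
  rw [← add_sum_erase _ _ (mem_univ x), sum_congr rfl fun z hz => hh.2 z (ne_of_mem_erase hz)]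
    at hsum
  have hdeg := add_sum_erase univ (fun z => (G.degree z : ℝ)) (mem_univ x)
  have htwice : ∑ z, (G.degree z : ℝ) = 2 * #G.edgeFinset := by
    exact_mod_cast G.sum_degrees_eq_twice_card_edges
  rw [if_pos rfl]
  linarith

lemma le_add (hG : G.Connected) {b c : V} {hb hc : V → ℝ} (hhb : G.IsHittingTime b hb)
    (hhc : G.IsHittingTime c hc) (x : V) : hc x ≤ hb x + hc b := by
  have := hG.le_of_lapMatrix_mulVec_nonpos (g := hc - hb) (u := b) (fun z hz => by
    rw [mulVec_sub, Pi.sub_apply, hhc.lapMatrix_mulVec_apply, hhb.lapMatrix_mulVec_apply, if_neg hz]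
    split_ifs <;> simp) x
  simp only [Pi.sub_apply, hhb.1] at this
  linarith

lemma add_le_of_adj {a b : V} {ha hb : V → ℝ} (hha : G.IsHittingTime a ha)
    (hhb : G.IsHittingTime b hb) (hab : G.Adj a b) : hb a + ha b ≤ 2 * #G.edgeFinset := by
  set w := hb - ha
  have hw : G.lapMatrix ℝ *ᵥ w = (2 * #G.edgeFinset : ℝ) • (Pi.single a 1 - Pi.single b 1) := by
    funext x
    rw [mulVec_sub, Pi.sub_apply, hha.lapMatrix_mulVec_apply, hhb.lapMatrix_mulVec_apply]
    by_cases hxa : x = a <;> by_cases hxb : x = b <;> simp [hxa, hxb, hab.ne, hab.ne.symm]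
  have hquad := sq_sub_le_dotProduct_lapMatrix_mulVec hab w
  rw [hw, dotProduct_smul, dotProduct_sub, dotProduct_single, dotProduct_single] at hquad
  have hwab : w a - w b = hb a + ha b := by simp [w, hha.1, hhb.1]
  rw [mul_one, mul_one, smul_eq_mul, hwab] at hquad
  nlinarith [show (0 : ℝ) ≤ #G.edgeFinset from Nat.cast_nonneg _]

end IsHittingTime

end SimpleGraph

section CoverKernel

variable {V : Type*} [Fintype V] [DecidableEq V] {G : SimpleGraph V} [DecidableRel G.Adj]

lemma coverKernel_nonneg (p q : V × Finset V) : 0 ≤ coverKernel G p q := by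
  unfold coverKernel
  split_ifs <;> positivity

lemma sum_coverKernel_mul (x : V) (S : Finset V) (f : V × Finset V → ℝ) :
    ∑ q, coverKernel G (x, S) q * f q =
      (∑ y ∈ G.neighborFinset x, f (y, insert y S)) / G.degree x := by
  have hinner : ∀ y, ∑ T, coverKernel G (x, S) (y, T) * f (y, T) =
      if G.Adj x y then f (y, insert y S) / G.degree x else 0 := fun y => by
    rw [sum_eq_single_of_mem (insert y S) (mem_univ _) fun T _ hT => by simp [coverKernel, hT]]
    by_cases hxy : G.Adj x y <;> simp [coverKernel, hxy, div_eq_inv_mul]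
  rw [Fintype.sum_prod_type, sum_congr rfl fun y _ => hinner y, ← sum_filter,
    ← G.neighborFinset_eq_filter, sum_div]

lemma sum_coverKernel_le_one (p : V × Finset V) : ∑ q, coverKernel G p q ≤ 1 := by
  have := sum_coverKernel_mul (G := G) p.1 p.2 fun _ => 1
  simp only [mul_one, sum_const, SimpleGraph.card_neighborFinset_eq_degree, nsmul_one] at this
  exact this ▸ div_self_le_one (G.degree p.1 : ℝ)

lemma mem_of_coverKernel_ne_zero {p q : V × Finset V} (h : coverKernel G p q ≠ 0) :
    q.1 ∈ q.2 := by
  unfold coverKernel at h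
  split_ifs at h with hpq
  · exact hpq.2 ▸ mem_insert_self _ _
  · exact absurd rfl h

end CoverKernel

section Tour

variable {V : Type*}

/-- The expected time to visit `w k, w (k + 1), …, w L` in this order, starting from `x`. -/
def tourTime (H : V → V → ℝ) (w : ℕ → V) (L k : ℕ) (x : V) : ℝ :=
  H (w k) x + ∑ j ∈ Ico k L, H (w (j + 1)) (w j)

variable [DecidableEq V]

def firstUnvisited (w : ℕ → V) (L : ℕ) (S : Finset V) : ℕ :=
  Nat.find (⟨L, .inr le_rfl⟩ : ∃ i, w i ∉ S ∨ L ≤ i)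

variable {w : ℕ → V} {L : ℕ}

lemma firstUnvisited_le (S : Finset V) : firstUnvisited w L S ≤ L :=
  Nat.find_min' _ (.inr le_rfl)

lemma firstUnvisited_mono {S S' : Finset V} (hSS' : S ⊆ S') :
    firstUnvisited w L S ≤ firstUnvisited w L S' :=
  Nat.find_mono fun _ => Or.imp_left fun h hS => h (hSS' hS)

variable [Fintype V]

lemma firstUnvisited_notMem (hw : ∀ x, ∃ i ≤ L, w i = x) {S : Finset V} (hS : S ≠ univ) :
    w (firstUnvisited w L S) ∉ S := by
  obtain ⟨z, hz⟩ : ∃ z, z ∉ S := by simpa [eq_univ_iff_forall] using hS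
  obtain ⟨i, hiL, rfl⟩ := hw z
  have hle : firstUnvisited w L S ≤ i := Nat.find_min' _ (.inl hz)
  rcases Nat.find_spec (⟨L, .inr le_rfl⟩ : ∃ i, w i ∉ S ∨ L ≤ i) with h | h
  · exact h
  · have : firstUnvisited w L S = i := by unfold firstUnvisited at hle ⊢; omega
    exact this ▸ hz

variable {G : SimpleGraph V} [DecidableRel G.Adj] {H : V → V → ℝ}

lemma tourTime_nonneg (hG : G.Connected) (hH : ∀ u, G.IsHittingTime u (H u)) (k : ℕ) (x : V) :
    0 ≤ tourTime H w L k x :=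
  add_nonneg ((hH _).nonneg hG x) (sum_nonneg fun _ _ => (hH _).nonneg hG _)

lemma tourTime_succ_le (hG : G.Connected) (hH : ∀ u, G.IsHittingTime u (H u)) {k : ℕ}
    (hk : k < L) (x : V) : tourTime H w L (k + 1) x ≤ tourTime H w L k x := by
  rw [tourTime, tourTime, sum_eq_sum_Ico_succ_bot hk]
  linarith [(hH (w k)).le_add hG (hH (w (k + 1))) x]

lemma tourTime_antitone (hG : G.Connected) (hH : ∀ u, G.IsHittingTime u (H u)) {k k' : ℕ}
    (hkk' : k ≤ k') (hk' : k' ≤ L) (x : V) : tourTime H w L k' x ≤ tourTime H w L k x := by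
  induction k', hkk' using Nat.le_induction with
  | base => exact le_rfl
  | succ k' _ ih => exact (tourTime_succ_le hG hH hk' x).trans (ih (by omega))

end Tour

section CoverTime

variable {V : Type*} [Fintype V] [DecidableEq V] {G : SimpleGraph V} [DecidableRel G.Adj]
  {H : V → V → ℝ} {w : ℕ → V} {L : ℕ}

lemma one_add_sum_coverKernel_mul_tourTime_le (hG : G.Connected)
    (hH : ∀ u, G.IsHittingTime u (H u)) (hw : ∀ x, ∃ i ≤ L, w i = x) {x : V} {S : Finset V}
    (hx : x ∈ S) (hS : S ≠ univ) :
    1 + ∑ q, coverKernel G (x, S) q * tourTime H w L (firstUnvisited w L q.2) q.1 ≤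
      tourTime H w L (firstUnvisited w L S) x := by
  set k := firstUnvisited w L S
  have hxk : x ≠ w k := fun h => firstUnvisited_notMem hw hS (h ▸ hx)
  have hdeg : (0 : ℝ) < G.degree x := by
    obtain ⟨z, hz⟩ : ∃ z, z ∉ S := by simpa [eq_univ_iff_forall] using hS
    have : Nontrivial V := ⟨⟨x, z, fun h => hz (h ▸ hx)⟩⟩
    exact_mod_cast hG.preconnected.degree_pos_of_nontrivial x
  have hstep : ∀ y, tourTime H w L (firstUnvisited w L (insert y S)) y ≤ tourTime H w L k y :=
    fun y => tourTime_antitone hG hH (firstUnvisited_mono (subset_insert y S))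
      (firstUnvisited_le _) y
  have hharm : ∑ y ∈ G.neighborFinset x, tourTime H w L k y =
      G.degree x * (tourTime H w L k x - 1) := by
    have := (hH (w k)).2 x hxk
    rw [SimpleGraph.lapMatrix_mulVec_apply] at this
    simp only [tourTime, sum_add_distrib, sum_const, SimpleGraph.card_neighborFinset_eq_degree,
      nsmul_eq_mul]
    linarith
  rw [sum_coverKernel_mul]
  calc 1 + (∑ y ∈ G.neighborFinset x, tourTime H w L (firstUnvisited w L (insert y S)) y) /
        G.degree x
      ≤ 1 + (∑ y ∈ G.neighborFinset x, tourTime H w L k y) / G.degree x := by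
        gcongr with y
        exact hstep y
    _ = tourTime H w L k x := by
        rw [hharm, mul_div_cancel_left₀ _ hdeg.ne']
        ring

theorem efht_coverKernel_le (hG : G.Connected) (hH : ∀ u, G.IsHittingTime u (H u)) {v : V}
    (hw₀ : w 0 = v) (hw : ∀ x, ∃ i ≤ L, w i = x) :
    efht (fun _ => coverKernel G) (univ.filter fun s : V × Finset V => s.2 = univ) (v, {v}) ≤
      ∑ i ∈ range L, H (w (i + 1)) (w i) :=
  calc _ ≤ tourTime H w L (firstUnvisited w L {v}) v :=
        efht_le_of_supersolution coverKernel_nonneg sum_coverKernel_le_one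
          (s := {p | p.1 ∈ p.2}) (fun _ _ _ => mem_of_coverKernel_ne_zero)
          (fun p _ => tourTime_nonneg hG hH _ _)
          (fun p hp hpA => one_add_sum_coverKernel_mul_tourTime_le hG hH hw hp (by simpa using hpA))
          (mem_singleton_self v)
    _ ≤ tourTime H w L 0 v := tourTime_antitone hG hH (Nat.zero_le _) (firstUnvisited_le _) v
    _ = ∑ i ∈ range L, H (w (i + 1)) (w i) := by
        rw [tourTime, hw₀, (hH v).1, zero_add, range_eq_Ico]

end CoverTime

/-- Aleliunas–Karp–Lipton–Lovász–Rackoff cover time bound: for a finite undirected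
connected graph `G`, the expected cover time of a simple random walk on `G`
started at any vertex (i.e. the expected number of steps until every vertex has
been visited, which is the expected first hitting time, for the walk recording
its visited vertices, of the states whose visited set is everything) is at most
`2 |E| (|V| - 1)`. -/
theorem cover_time_bound {V : Type*} [Fintype V] [DecidableEq V]
    (G : SimpleGraph V) [DecidableRel G.Adj] (hconn : G.Connected) :
    ∀ v : V,
      efht (fun _ => coverKernel G)
        (Finset.univ.filter (fun s : V × Finset V => s.2 = Finset.univ))
        (v, {v})
      ≤ 2 * (G.edgeFinset.card : ℝ) * ((Fintype.card V : ℝ) - 1) := by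
  intro v
  choose H hH using hconn.exists_isHittingTime
  obtain ⟨L, w, hw₀, hw, hcost⟩ := hconn.exists_cover_seq (c := fun x y => H y x)
    (fun x y hxy => (hH x).add_le_of_adj (hH y) hxy) v
  exact (efht_coverKernel_le hconn hH hw₀ hw).trans hcost
end
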